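/- arXiv:1702.03445 — 6 statements merged into one kernel-verified Lean document; each statement's English description precedes it below -/
import Mathlib

section
/- Let V be an abelian group with a biadditive form ⟨-,-⟩_V : V × V → ℤ, and let v ∈ V satisfy ⟨v, x⟩_V = −⟨x, v⟩_V for all x ∈ V. Let p ≥ 2 be an integer and let T be the p-tube with basis (s_j)_{j ∈ ℤ/pℤ} and form ⟨-,-⟩_T. Define a biadditive form ⟨-,-⟩ on V ⊕ T by: ⟨(w,0),(w',0)⟩ = ⟨w,w'⟩_V; ⟨(0,u),(0,u')⟩ = ⟨u,u'⟩_T; ⟨(w,0),(0,s_j)⟩ = ⟨w,v⟩_V if j = 1 in ℤ/pℤ and 0 otherwise; and ⟨(0,s_j),(w,0)⟩ = −⟨w,v⟩_V if j = 0 in ℤ/pℤ and 0 otherwise. Then the element u₀ := (−v, Σ_{j ∈ ℤ/pℤ} s_j) of V ⊕ T lies in the radical of this form: ⟨u₀, z⟩ = 0 and ⟨z, u₀⟩ = 0 for all z ∈ V ⊕ T. (Hence the form descends to the quotient (V ⊕ T)/⟨u₀⟩, the bilinear group obtained by attaching a p-tube at v.) -/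
/-- The `p`-tube: the free abelian group on `ZMod p` (with basis `s_j = single j 1`),
with the biadditive form determined on basis elements by
`⟨s_i, s_j⟩ = 1` if `j = i`, `-1` if `j = i + 1`, and `0` otherwise. -/
def tubeForm (p : ℕ) (x y : ZMod p →₀ ℤ) : ℤ :=
  Finsupp.sum x fun i a => Finsupp.sum y fun j b =>
    a * b * ((if j = i then 1 else 0) - (if j = i + 1 then 1 else 0))

/-- The biadditive form on `V ⊕ T` (with `T` the `p`-tube) used when attaching a `p`-tube
to `V` at the element `v`: it restricts to the given forms on `V` and `T`, and the cross
terms are `⟨(w,0),(0,s_j)⟩ = ⟨w,v⟩_V` if `j = 1` and `0` otherwise, and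
`⟨(0,s_j),(w,0)⟩ = -⟨w,v⟩_V` if `j = 0` and `0` otherwise. -/
def attachForm (V : Type*) [AddCommGroup V] (βV : V → V → ℤ) (v : V) (p : ℕ)
    (z z' : V × (ZMod p →₀ ℤ)) : ℤ :=
  βV z.1 z'.1 + tubeForm p z.2 z'.2 + z'.2 1 * βV z.1 v - z.2 0 * βV z'.1 v

/-- Evaluation of `∑ j, single j 1` at any point is `1`. -/
lemma attach_tube_Seval (p : ℕ) [NeZero p] (k : ZMod p) :
    (∑ j : ZMod p, Finsupp.single j (1:ℤ)) k = 1 := by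
  rw [Finset.sum_apply']
  simp [Finsupp.single_apply]

/-- Sum over the first index of the tube-form coefficients vanishes. -/
lemma attach_tube_coeff_sum (p : ℕ) [NeZero p] (j : ZMod p) :
    ∑ i : ZMod p, ((if j = i then (1:ℤ) else 0) - (if j = i + 1 then 1 else 0)) = 0 := by
  rw [Finset.sum_sub_distrib]
  have h1 : ∑ i : ZMod p, (if j = i then (1:ℤ) else 0) = 1 := by
    simp [Finset.sum_ite_eq]
  have h2 : ∑ i : ZMod p, (if j = i + 1 then (1:ℤ) else 0) = 1 := by
    have e : ∀ i : ZMod p, (if j = i + 1 then (1:ℤ) else 0) = (if i = j - 1 then 1 else 0) := by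
      intro i
      congr 1
      simp only [eq_iff_iff]
      constructor <;> intro h
      · rw [h]; ring
      · rw [h]; ring
    simp only [e]
    simp
  rw [h1, h2]; ring

lemma attach_tube_sum_left (p : ℕ) [NeZero p] (y : ZMod p →₀ ℤ) :
    tubeForm p (∑ j : ZMod p, Finsupp.single j 1) y = 0 := by
  unfold tubeForm
  rw [Finsupp.sum_fintype]
  · simp only [attach_tube_Seval, one_mul, Finsupp.sum]
    rw [Finset.sum_comm]
    apply Finset.sum_eq_zero
    intro j _
    rw [← Finset.mul_sum, attach_tube_coeff_sum, mul_zero]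
  · intro i
    rw [Finsupp.sum]
    simp

lemma attach_tube_sum_right (p : ℕ) [NeZero p] (x : ZMod p →₀ ℤ) :
    tubeForm p x (∑ j : ZMod p, Finsupp.single j 1) = 0 := by
  unfold tubeForm
  rw [Finsupp.sum]
  apply Finset.sum_eq_zero
  intro i _
  rw [Finsupp.sum_fintype]
  · have e : ∀ j : ZMod p, (∑ k : ZMod p, Finsupp.single k (1:ℤ)) j = 1 := attach_tube_Seval p
    simp only [e, mul_one]
    rw [← Finset.mul_sum, Finset.sum_sub_distrib]
    have h1 : ∑ j : ZMod p, (if j = i then (1:ℤ) else 0) = 1 := by simp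
    have h2 : ∑ j : ZMod p, (if j = i + 1 then (1:ℤ) else 0) = 1 := by simp
    rw [h1, h2]; ring
  · intro j; simp

/-- Attaching a `p`-tube (`p ≥ 2`) to `(V, βV)` at an element `v` with
`⟨v, x⟩ = -⟨x, v⟩` for all `x`: the element `u₀ = (-v, ∑_{j ∈ ℤ/p} s_j)` of `V ⊕ T`
lies in the radical of the attached form, so the form descends to the quotient
`(V ⊕ T)/⟨u₀⟩`, the bilinear group obtained by attaching a `p`-tube at `v`. -/
theorem attach_tube_radical (V : Type*) [AddCommGroup V] (βV : V → V → ℤ)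
    (hβ₁ : ∀ x y z : V, βV (x + y) z = βV x z + βV y z)
    (hβ₂ : ∀ x y z : V, βV x (y + z) = βV x y + βV x z)
    (v : V) (hv : ∀ x : V, βV v x = -βV x v)
    (p : ℕ) [NeZero p] (hp : 2 ≤ p) :
    let u₀ : V × (ZMod p →₀ ℤ) := (-v, ∑ j : ZMod p, Finsupp.single j 1)
    ∀ z : V × (ZMod p →₀ ℤ),
      attachForm V βV v p u₀ z = 0 ∧ attachForm V βV v p z u₀ = 0 := by
  intro u₀ z
  have h0l : ∀ w : V, βV 0 w = 0 := by
    intro w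
    have h := hβ₁ 0 0 w
    rw [add_zero] at h
    linarith
  have h0r : ∀ w : V, βV w 0 = 0 := by
    intro w
    have h := hβ₂ w 0 0
    rw [add_zero] at h
    linarith
  have hnegl : ∀ w : V, βV (-v) w = -βV v w := by
    intro w
    have h := hβ₁ v (-v) w
    rw [add_neg_cancel, h0l] at h
    linarith
  have hnegr : ∀ w : V, βV w (-v) = -βV w v := by
    intro w
    have h := hβ₂ w v (-v)
    rw [add_neg_cancel, h0r] at h
    linarith
  have hvv : βV v v = 0 := by have := hv v; linarith
  constructor
  · show βV (-v) z.1 + tubeForm p (∑ j : ZMod p, Finsupp.single j 1) z.2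
      + z.2 1 * βV (-v) v - (∑ j : ZMod p, Finsupp.single j (1:ℤ)) 0 * βV z.1 v = 0
    rw [attach_tube_sum_left, hnegl, hnegl, hv, hvv, attach_tube_Seval]
    ring
  · show βV z.1 (-v) + tubeForm p z.2 (∑ j : ZMod p, Finsupp.single j 1)
      + (∑ j : ZMod p, Finsupp.single j (1:ℤ)) 1 * βV z.1 v - z.2 0 * βV (-v) v = 0
    rw [attach_tube_sum_right, hnegr, hnegl, hvv, attach_tube_Seval]
    ring
end

section
/- Let V be an abelian group and τ an additive automorphism of V. Let a, s₀, s₁, …, s_t be elements of V, let p₁, …, p_t be positive integers, let p̄ be a positive common multiple of p₁, …, p_t, and let χ be an integer. Assume: (i) τ(s₀) = s₀; (ii) Σ_{j=0}^{pᵢ−1} τʲ(sᵢ) = s₀ for each i = 1, …, t; (iii) τ(a) − a = −Σ_{i=1}^{t} sᵢ + (t − χ)·s₀. Then τ^{p̄}(a) − a = (Σ_{i=1}^{t}(p̄ − p̄/pᵢ) − p̄·χ)·s₀. -/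
/-!
Write `τᵏ` for `k • τ`. Telescoping gives `τ^p̄ a - a = ∑_{k<p̄} τᵏ (τ a - a)`. Since `s₀` is
`τ`-fixed, the range `k < p̄` splits into `p̄ / pᵢ` blocks of length `pᵢ`, each contributing
`∑_{j<pᵢ} τʲ sᵢ = s₀`; so `∑_{k<p̄} τᵏ sᵢ = (p̄ / pᵢ) • s₀`, while the constant term
`(t - χ) • s₀` contributes `p̄ (t - χ) • s₀`.
-/

open Finset

namespace AddAut

variable {V : Type*} [AddCommGroup V] (τ : AddAut V)

theorem succ_nsmul_apply (n : ℕ) (x : V) : ((n + 1) • τ) x = (n • τ) (τ x) := by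
  rw [succ_nsmul, add_apply]

theorem nsmul_apply_of_apply_eq_self {x : V} (hx : τ x = x) (n : ℕ) : (n • τ) x = x := by
  induction n with
  | zero => rfl
  | succ n ih => rw [succ_nsmul_apply, hx, ih]

theorem nsmul_apply_sub_self (n : ℕ) (a : V) :
    (n • τ) a - a = ∑ k ∈ range n, (k • τ) (τ a - a) := by
  simp only [map_sub, ← succ_nsmul_apply]
  exact (sum_range_sub (fun k => (k • τ) a) n).symm

theorem sum_range_mul_nsmul_apply {x s₀ : V} (h₀ : τ s₀ = s₀) {q : ℕ}
    (hx : ∑ j ∈ range q, (j • τ) x = s₀) (m : ℕ) :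
    ∑ k ∈ range (m * q), (k • τ) x = m • s₀ := by
  induction m with
  | zero => simp
  | succ m ih =>
    have block : ∑ j ∈ range q, ((m * q + j) • τ) x = s₀ := by
      simp only [add_nsmul, add_apply, ← map_sum, hx, nsmul_apply_of_apply_eq_self τ h₀]
    rw [add_mul, one_mul, sum_range_add, ih, block, succ_nsmul]

end AddAut

open AddAut

theorem tau_pow_structure_sheaf_general (V : Type*) [AddCommGroup V] (τ : AddAut V)
    (a s₀ : V) (t : ℕ) (s : Fin t → V) (p : Fin t → ℕ)
    (pbar : ℕ) (hdvd : ∀ i, p i ∣ pbar) (χ : ℤ)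
    (h₀ : τ s₀ = s₀)
    (h₁ : ∀ i, ∑ j ∈ Finset.range (p i), (j • τ) (s i) = s₀)
    (h₂ : τ a - a = -(∑ i, s i) + ((t : ℤ) - χ) • s₀) :
    (pbar • τ) a - a =
      ((∑ i, ((pbar : ℤ) - ((pbar / p i : ℕ) : ℤ))) - (pbar : ℤ) * χ) • s₀ := by
  have orbit_sum (i : Fin t) : ∑ k ∈ range pbar, (k • τ) (s i) = (pbar / p i) • s₀ := by
    conv_lhs => rw [← Nat.div_mul_cancel (hdvd i)]
    exact sum_range_mul_nsmul_apply τ h₀ (h₁ i) _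
  have step (k : ℕ) :
      (k • τ) (τ a - a) = -(∑ i, (k • τ) (s i)) + ((t : ℤ) - χ) • s₀ := by
    rw [h₂, map_add, map_neg, map_sum, map_zsmul, nsmul_apply_of_apply_eq_self τ h₀]
  rw [nsmul_apply_sub_self, sum_congr rfl fun k _ => step k, sum_add_distrib, sum_neg_distrib,
    sum_comm, sum_congr rfl fun i _ => orbit_sum i, sum_const, card_range]
  simp only [← natCast_zsmul, ← sum_smul, smul_smul, ← neg_smul, ← add_smul]
  congr 1
  simp only [sum_sub_distrib, sum_const, card_univ, Fintype.card_fin, nsmul_eq_mul]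
  ring

/-- The key computation in the (reduced) Grothendieck group of a weighted projective
curve: if `τ s₀ = s₀`, `∑_{j=0}^{pᵢ-1} τʲ sᵢ = s₀` for each `i`, and
`τ a - a = -∑ᵢ sᵢ + (t - χ) • s₀`, then for any positive common multiple `p̄` of the `pᵢ`
one has `τ^p̄ a - a = (∑ᵢ (p̄ - p̄/pᵢ) - p̄ χ) • s₀`. -/
theorem tau_pow_structure_sheaf (V : Type*) [AddCommGroup V] (τ : AddAut V)
    (a s₀ : V) (t : ℕ) (s : Fin t → V) (p : Fin t → ℕ) (hp : ∀ i, 0 < p i)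
    (pbar : ℕ) (hpbar : 0 < pbar) (hdvd : ∀ i, p i ∣ pbar) (χ : ℤ)
    (h₀ : τ s₀ = s₀)
    (h₁ : ∀ i, ∑ j ∈ Finset.range (p i), (j • τ) (s i) = s₀)
    (h₂ : τ a - a = -(∑ i, s i) + ((t : ℤ) - χ) • s₀) :
    (pbar • τ) a - a =
      ((∑ i, ((pbar : ℤ) - ((pbar / p i : ℕ) : ℤ))) - (pbar : ℤ) * χ) • s₀ :=
  tau_pow_structure_sheaf_general V τ a s₀ t s p pbar hdvd χ h₀ h₁ h₂
end

section
/- Let (V, ⟨-,-⟩, τ) be a bilinear group, let a, s₀ ∈ V, let t ≥ 0, let p₁, …, p_t be positive integers, let p̄ be a positive common multiple of p₁, …, p_t, and let χ be an integer. Set δ̄ := Σ_{i=1}^{t}(p̄ − p̄/pᵢ) − p̄·χ. Assume: (i) ⟨a, s₀⟩ = 1; (ii) τ(s₀) = s₀; (iii) τ^{p̄}(a) − a = δ̄·s₀. Then 2·Σ_{j=0}^{p̄−1} ⟨τʲ(a), a⟩ = −p̄·δ̄ = p̄·(p̄·χ − Σ_{i=1}^{t}(p̄ − p̄/pᵢ)).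 -/
/-!
Write `f j = ⟨τʲ a, a⟩`. The relation `⟨y, x⟩ = -⟨x, τ y⟩` makes the form `τ`-invariant, so for
`j + 1 + k = p̄` it turns `f j` into `-⟨τᵏ a, τ^p̄ a⟩ = -⟨τᵏ a, a + δ̄ s₀⟩ = -f k - δ̄`, using that
`⟨τᵏ a, s₀⟩ = ⟨a, s₀⟩ = 1` because `s₀` is `τ`-fixed. Pairing `j` with `p̄ - 1 - j` in the sum gives
`2 Σ f = -p̄ δ̄`.
-/

theorem Finset.two_mul_sum_range_eq_of_add_reflect {R : Type*} [CommSemiring R] {f : ℕ → R}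
    {n : ℕ} {c : R} (h : ∀ j < n, f j + f (n - 1 - j) = c) :
    2 * ∑ j ∈ range n, f j = n * c := by
  calc 2 * ∑ j ∈ range n, f j
      = ∑ j ∈ range n, f j + ∑ j ∈ range n, f (n - 1 - j) := by
        rw [two_mul, sum_range_reflect f n]
    _ = ∑ _j ∈ range n, c := by
        rw [← sum_add_distrib]
        exact sum_congr rfl fun j hj => h j (mem_range.mp hj)
    _ = n * c := by rw [sum_const, card_range, nsmul_eq_mul]

-- `AddAut V` is written additively with `+` as composition, so `n • τ` is the power `τⁿ`.
theorem AddAut.nsmul_apply_of_apply_eq {V : Type*} [Add V] {τ : AddAut V} {s : V}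
    (hs : τ s = s) (n : ℕ) : (n • τ) s = s := by
  induction n with
  | zero => rfl
  | succ n ih => rw [succ_nsmul', AddAut.add_apply, ih, hs]

theorem AddAut.nsmul_apply_nsmul_apply {V : Type*} [Add V] (τ : AddAut V) (m n : ℕ) (x : V) :
    (m • τ) ((n • τ) x) = ((m + n) • τ) x := by
  rw [add_nsmul, AddAut.add_apply]

section BilinearGroup

variable {V : Type*} [AddCommGroup V] {β : V → V → ℤ} {τ : AddAut V}

theorem apply_zsmul_of_map_add (hβ : ∀ x y z : V, β x (y + z) = β x y + β x z)
    (x : V) (n : ℤ) (y : V) : β x (n • y) = n * β x y :=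
  map_zsmul (AddMonoidHom.mk' (β x) (hβ x)) n y

-- the bilinear-group relation: `τ` acts as a Serre functor for `β`
variable (hτ : ∀ x y : V, β y x = -β x (τ y))
include hτ

theorem invariant_of_serre (x y : V) : β (τ x) (τ y) = β x y := by
  rw [hτ y x, hτ (τ x) y, neg_neg]

theorem nsmul_invariant_of_serre (n : ℕ) (x y : V) :
    β ((n • τ) x) ((n • τ) y) = β x y := by
  induction n generalizing x y with
  | zero => rfl
  | succ n ih => rw [succ_nsmul, AddAut.add_apply, AddAut.add_apply, ih,
      invariant_of_serre hτ]

theorem apply_nsmul_apply_eq_neg_of_serre {j k n : ℕ} (hn : j + 1 + k = n) (x : V) :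
    β ((j • τ) x) x = -β ((k • τ) x) ((n • τ) x) := by
  have hτj : τ ((j • τ) x) = ((j + 1) • τ) x := by rw [succ_nsmul', AddAut.add_apply]
  rw [hτ x, hτj, ← nsmul_invariant_of_serre hτ k, AddAut.nsmul_apply_nsmul_apply,
    ← hn, add_comm k]

theorem two_mul_sum_range_apply_nsmul_apply (hβ : ∀ x y z : V, β x (y + z) = β x y + β x z)
    {a s₀ : V} {n : ℕ} {δ : ℤ} (h₁ : β a s₀ = 1) (h₂ : τ s₀ = s₀)
    (h₃ : (n • τ) a - a = δ • s₀) :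
    2 * ∑ j ∈ Finset.range n, β ((j • τ) a) a = -(n : ℤ) * δ := by
  have hs₀ (k : ℕ) : β ((k • τ) a) s₀ = 1 := by
    rw [← AddAut.nsmul_apply_of_apply_eq h₂ k, nsmul_invariant_of_serre hτ, h₁]
  have hreflect (j : ℕ) (hj : j < n) :
      β ((j • τ) a) a + β (((n - 1 - j) • τ) a) a = -δ := by
    rw [apply_nsmul_apply_eq_neg_of_serre hτ (by omega : j + 1 + (n - 1 - j) = n),
      eq_add_of_sub_eq' h₃, hβ, apply_zsmul_of_map_add hβ, hs₀]
    ring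
  rw [Finset.two_mul_sum_range_eq_of_add_reflect hreflect, neg_mul, mul_neg]

end BilinearGroup

theorem orbifold_euler_characteristic_computation_general
    (V : Type*) [AddCommGroup V] (β : V → V → ℤ)
    (hβ₂ : ∀ x y z : V, β x (y + z) = β x y + β x z)
    (τ : AddAut V)
    (hτ : ∀ x y : V, β y x = -β x (τ y))
    (a s₀ : V) (t : ℕ) (p : Fin t → ℕ)
    (pbar : ℕ) (χ : ℤ)
    (δ : ℤ) (hδ : δ = (∑ i, ((pbar : ℤ) - ((pbar / p i : ℕ) : ℤ))) - (pbar : ℤ) * χ)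
    (h₁ : β a s₀ = 1) (h₂ : τ s₀ = s₀)
    (h₃ : (pbar • τ) a - a = δ • s₀) :
    2 * (∑ j ∈ Finset.range pbar, β ((j • τ) a) a) = -(pbar : ℤ) * δ ∧
      -(pbar : ℤ) * δ =
        (pbar : ℤ) * ((pbar : ℤ) * χ - ∑ i, ((pbar : ℤ) - ((pbar / p i : ℕ) : ℤ))) :=
  ⟨two_mul_sum_range_apply_nsmul_apply hτ hβ₂ h₁ h₂ h₃, by rw [hδ]; ring⟩

/-- The lattice computation underlying the orbifold Euler characteristic formula:
in a bilinear group `(V, β, τ)`, if `β a s₀ = 1`, `τ s₀ = s₀` and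
`τ^p̄ a - a = δ̄ • s₀` where `δ̄ = ∑ᵢ (p̄ - p̄/pᵢ) - p̄ χ`, then
`2 ∑_{j=0}^{p̄-1} β (τʲ a) a = -p̄ δ̄ = p̄ (p̄ χ - ∑ᵢ (p̄ - p̄/pᵢ))`. -/
theorem orbifold_euler_characteristic_computation
    (V : Type*) [AddCommGroup V] (β : V → V → ℤ)
    (hβ₁ : ∀ x y z : V, β (x + y) z = β x z + β y z)
    (hβ₂ : ∀ x y z : V, β x (y + z) = β x y + β x z)
    (τ : AddAut V)
    (hτ : ∀ x y : V, β y x = -β x (τ y))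
    (a s₀ : V) (t : ℕ) (p : Fin t → ℕ) (hp : ∀ i, 0 < p i)
    (pbar : ℕ) (hpbar : 0 < pbar) (hdvd : ∀ i, p i ∣ pbar) (χ : ℤ)
    (δ : ℤ) (hδ : δ = (∑ i, ((pbar : ℤ) - ((pbar / p i : ℕ) : ℤ))) - (pbar : ℤ) * χ)
    (h₁ : β a s₀ = 1) (h₂ : τ s₀ = s₀)
    (h₃ : (pbar • τ) a - a = δ • s₀) :
    2 * (∑ j ∈ Finset.range pbar, β ((j • τ) a) a) = -(pbar : ℤ) * δ ∧
      -(pbar : ℤ) * δ =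
        (pbar : ℤ) * ((pbar : ℤ) * χ - ∑ i, ((pbar : ℤ) - ((pbar / p i : ℕ) : ℤ))) :=
  orbifold_euler_characteristic_computation_general V β hβ₂ τ hτ a s₀ t p pbar χ δ hδ h₁ h₂ h₃
end

section
/- Let S be a finite multiset of integers, each ≥ 2. Then Σ_{p ∈ S} (1 − 1/p) < 2 (in ℚ) if and only if S has at most two elements, or S = {2, 2, n} for some integer n ≥ 2, or S = {2, 3, 3}, or S = {2, 3, 4}, or S = {2, 3, 5}. -/
lemma wpl_swap12 (a b c : ℕ) : ({a,b,c} : Multiset ℕ) = {b,a,c} :=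
  Multiset.cons_swap a b {c}

lemma wpl_swap23 (a b c : ℕ) : ({a,b,c} : Multiset ℕ) = {a,c,b} :=
  congrArg (a ::ₘ ·) (Multiset.cons_swap b c 0)

lemma wpl_sorted (a b c : ℕ) (ha : 2 ≤ a) (hab : a ≤ b) (hbc : b ≤ c)
    (h : 1 < (1:ℚ)/a + 1/b + 1/c) :
    (∃ n : ℕ, 2 ≤ n ∧ ({a,b,c} : Multiset ℕ) = {2,2,n}) ∨
    ({a,b,c} : Multiset ℕ) = {2,3,3} ∨ ({a,b,c} : Multiset ℕ) = {2,3,4} ∨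
    ({a,b,c} : Multiset ℕ) = {2,3,5} := by
  have hb : 2 ≤ b := ha.trans hab
  have hc : 2 ≤ c := hb.trans hbc
  have ha0 : (0:ℚ) < a := by positivity
  have hb0 : (0:ℚ) < b := by positivity
  have hc0 : (0:ℚ) < c := by positivity
  have hba : (1:ℚ)/b ≤ 1/a := by
    apply one_div_le_one_div_of_le ha0; exact_mod_cast hab
  have hcb : (1:ℚ)/c ≤ 1/b := by
    apply one_div_le_one_div_of_le hb0; exact_mod_cast hbc
  have ha3 : a < 3 := by
    by_contra hh
    push_neg at hh
    have : (1:ℚ)/a ≤ 1/3 := by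
      apply one_div_le_one_div_of_le (by norm_num); exact_mod_cast hh
    linarith
  have ha2 : a = 2 := by omega
  subst ha2
  push_cast at h
  have hb4 : b < 4 := by
    by_contra hh
    push_neg at hh
    have : (1:ℚ)/b ≤ 1/4 := by
      apply one_div_le_one_div_of_le (by norm_num); exact_mod_cast hh
    linarith
  interval_cases b
  · exact Or.inl ⟨c, hc, rfl⟩
  · push_cast at h
    have hc6 : c < 6 := by
      by_contra hh
      push_neg at hh
      have : (1:ℚ)/c ≤ 1/6 := by
        apply one_div_le_one_div_of_le (by norm_num); exact_mod_cast hh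
      linarith
    interval_cases c
    · exact Or.inr (Or.inl rfl)
    · exact Or.inr (Or.inr (Or.inl rfl))
    · exact Or.inr (Or.inr (Or.inr rfl))

lemma wpl_three (a b c : ℕ) (ha : 2 ≤ a) (hb : 2 ≤ b) (hc : 2 ≤ c)
    (h : 1 < (1:ℚ)/a + 1/b + 1/c) :
    (∃ n : ℕ, 2 ≤ n ∧ ({a,b,c} : Multiset ℕ) = {2,2,n}) ∨
    ({a,b,c} : Multiset ℕ) = {2,3,3} ∨ ({a,b,c} : Multiset ℕ) = {2,3,4} ∨
    ({a,b,c} : Multiset ℕ) = {2,3,5} := by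
  rcases le_total a b with hab | hab <;> rcases le_total b c with hbc | hbc <;>
    rcases le_total a c with hac | hac
  · exact wpl_sorted a b c ha hab hbc h
  · exact wpl_sorted a b c ha hab hbc h
  · rw [wpl_swap23 a b c]
    exact wpl_sorted a c b ha hac hbc (by linarith)
  · rw [wpl_swap23 a b c, wpl_swap12 a c b]
    exact wpl_sorted c a b hc hac hab (by linarith)
  · rw [wpl_swap12 a b c]
    exact wpl_sorted b a c hb hab hac (by linarith)
  · rw [wpl_swap12 a b c, wpl_swap23 b a c]
    exact wpl_sorted b c a hb hbc hac (by linarith)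
  · rw [wpl_swap12 a b c]
    exact wpl_sorted b a c hb hab hac (by linarith)
  · rw [wpl_swap23 a b c, wpl_swap12 a c b, wpl_swap23 c a b]
    exact wpl_sorted c b a hc hbc hab (by linarith)

/-- For a finite multiset `S` of integers each `≥ 2` (a weight sequence), one has
`∑_{p ∈ S} (1 - 1/p) < 2` if and only if `S` has at most two elements, or `S` is one of
`{2,2,n}` (`n ≥ 2`), `{2,3,3}`, `{2,3,4}`, `{2,3,5}` — the weight sequences of positive
orbifold Euler characteristic (tame domestic type). -/
theorem positive_orbifold_euler_characteristic_classification
    (S : Multiset ℕ) (hS : ∀ p ∈ S, 2 ≤ p) :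
    (S.map (fun p => 1 - 1 / (p : ℚ))).sum < 2 ↔
      S.card ≤ 2 ∨
        (∃ n : ℕ, 2 ≤ n ∧ S = {2, 2, n}) ∨
        S = {2, 3, 3} ∨ S = {2, 3, 4} ∨ S = {2, 3, 5} := by
  simp only [Multiset.pure_def, Multiset.bind_def, Multiset.bind_singleton, Multiset.map_map,
    Function.comp]
  constructor
  · intro h
    have hhalf : ∀ x ∈ S.map (fun p : ℕ => 1 - 1 / (p : ℚ)), (1/2 : ℚ) ≤ x := by
      intro x hx
      obtain ⟨p, hp, rfl⟩ := Multiset.mem_map.mp hx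
      have hp2 := hS p hp
      have hp0 : (0:ℚ) < p := by positivity
      have : (1:ℚ)/p ≤ 1/2 := by
        apply one_div_le_one_div_of_le (by norm_num); exact_mod_cast hp2
      linarith
    have hsum := Multiset.card_nsmul_le_sum hhalf
    rw [Multiset.card_map, nsmul_eq_mul] at hsum
    have hcard : S.card ≤ 3 := by
      by_contra hh
      push_neg at hh
      have h4 : (4:ℚ) ≤ S.card := by exact_mod_cast hh
      nlinarith
    rcases Nat.lt_or_ge S.card 3 with h3 | h3
    · exact Or.inl (by omega)
    · have hc3 : S.card = 3 := le_antisymm hcard h3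
      obtain ⟨a, b, c, rfl⟩ := Multiset.card_eq_three.mp hc3
      have ha := hS a (by simp)
      have hb := hS b (by simp)
      have hc := hS c (by simp)
      simp only [Multiset.insert_eq_cons, Multiset.map_cons, Multiset.map_singleton,
        Multiset.sum_cons, Multiset.sum_singleton] at h
      exact Or.inr (wpl_three a b c ha hb hc (by linarith))
  · rintro (h2 | ⟨n, hn, rfl⟩ | rfl | rfl | rfl)
    · interval_cases h : S.card
      · rw [Multiset.card_eq_zero.mp h]; norm_num
      · obtain ⟨a, rfl⟩ := Multiset.card_eq_one.mp h
        have ha := hS a (by simp)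
        have ha0 : (0:ℚ) < 1/a := by positivity
        simp only [Multiset.map_singleton, Multiset.sum_singleton]
        linarith
      · obtain ⟨a, b, rfl⟩ := Multiset.card_eq_two.mp h
        have ha := hS a (by simp)
        have hb := hS b (by simp)
        have ha0 : (0:ℚ) < 1/a := by positivity
        have hb0 : (0:ℚ) < 1/b := by positivity
        simp only [Multiset.insert_eq_cons, Multiset.map_cons, Multiset.map_singleton,
          Multiset.sum_cons, Multiset.sum_singleton]
        linarith
    · have hn0 : (0:ℚ) < 1/n := by positivity
      have hn0' : (0:ℚ) < (n:ℚ)⁻¹ := by positivity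
      simp only [Multiset.insert_eq_cons, Multiset.map_cons, Multiset.map_singleton,
        Multiset.sum_cons, Multiset.sum_singleton]
      push_cast
      linarith
    · simp only [Multiset.insert_eq_cons, Multiset.map_cons, Multiset.map_singleton,
        Multiset.sum_cons, Multiset.sum_singleton]
      norm_num
    · simp only [Multiset.insert_eq_cons, Multiset.map_cons, Multiset.map_singleton,
        Multiset.sum_cons, Multiset.sum_singleton]
      norm_num
    · simp only [Multiset.insert_eq_cons, Multiset.map_cons, Multiset.map_singleton,
        Multiset.sum_cons, Multiset.sum_singleton]
      norm_num
end

section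
/- Let S be a finite multiset of integers, each ≥ 2. Then Σ_{p ∈ S} (1 − 1/p) = 2 (in ℚ) if and only if S is one of the four multisets {2, 3, 6}, {2, 4, 4}, {3, 3, 3}, {2, 2, 2, 2}. -/
lemma inv_cast_anti {n a : ℕ} (hn : 0 < n) (h : n ≤ a) : (a : ℚ)⁻¹ ≤ (n : ℚ)⁻¹ := by
  rw [inv_eq_one_div, inv_eq_one_div]
  exact one_div_le_one_div_of_le (by exact_mod_cast hn) (by exact_mod_cast h)

lemma inv_le_half {a : ℕ} (ha : 2 ≤ a) : (a : ℚ)⁻¹ ≤ 1 / 2 := by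
  have := inv_cast_anti (n := 2) (by norm_num) ha
  norm_num at this
  linarith

lemma inv_cast_pos {a : ℕ} (ha : 2 ≤ a) : 0 < (a : ℚ)⁻¹ := by
  have : (0 : ℚ) < a := by exact_mod_cast Nat.lt_of_lt_of_le (by norm_num) ha
  positivity

lemma eq_two_of_half_le {a : ℕ} (ha : 2 ≤ a) (h : 1 / 2 ≤ (a : ℚ)⁻¹) : a = 2 := by
  by_contra hne
  have h3 : 3 ≤ a := by omega
  have := inv_cast_anti (n := 3) (by norm_num) h3
  norm_num at this
  linarith

lemma le_six (p q r : ℕ) (hp : 2 ≤ p) (hq : 2 ≤ q) (hr : 2 ≤ r)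
    (h : (p : ℚ)⁻¹ + (q : ℚ)⁻¹ + (r : ℚ)⁻¹ = 1) : p ≤ 6 := by
  by_contra hp6
  push_neg at hp6
  have h1 : (p : ℚ)⁻¹ ≤ (7 : ℚ)⁻¹ := by
    have := inv_cast_anti (n := 7) (by norm_num) hp6
    norm_num at this ⊢
    linarith
  have hppos := inv_cast_pos hp
  have hq' : q = 2 ∨ 3 ≤ q := by omega
  have hr' : r = 2 ∨ 3 ≤ r := by omega
  rcases hq' with rfl | hq3 <;> rcases hr' with rfl | hr3
  · norm_num at h; linarith
  · have := inv_cast_anti (n := 3) (by norm_num) hr3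
    norm_num at this h; linarith
  · have := inv_cast_anti (n := 3) (by norm_num) hq3
    norm_num at this h; linarith
  · have h2 := inv_cast_anti (n := 3) (by norm_num) hq3
    have h3 := inv_cast_anti (n := 3) (by norm_num) hr3
    norm_num at h2 h3; linarith




/-- For a finite multiset `S` of integers each `≥ 2` (a weight sequence), one has
`∑_{p ∈ S} (1 - 1/p) = 2` if and only if `S` is one of the four multisets
`{2,3,6}`, `{2,4,4}`, `{3,3,3}`, `{2,2,2,2}` — the tubular weight sequences, i.e. those
of orbifold Euler characteristic zero. -/
theorem zero_orbifold_euler_characteristic_classification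
    (S : Multiset ℕ) (hS : ∀ p ∈ S, 2 ≤ p) :
    (S.map (fun p => 1 - 1 / (p : ℚ))).sum = 2 ↔
      S = {2, 3, 6} ∨ S = {2, 4, 4} ∨ S = {3, 3, 3} ∨ S = {2, 2, 2, 2} := by
  constructor
  · intro hsum
    have hsum' : (S.map (fun p : ℕ => 1 - ((p : ℚ))⁻¹)).sum = 2 := by
      simp only [one_div, Multiset.bind, Multiset.map_map, Function.comp] at hsum
      simpa using hsum
    clear hsum
    have hcard : (S.card : ℚ) * (1 / 2) ≤ 2 := by
      have h := Multiset.card_nsmul_le_sum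
        (s := S.map (fun p : ℕ => 1 - ((p : ℚ))⁻¹)) (a := (1/2 : ℚ)) ?_
      · rw [Multiset.card_map, hsum'] at h
        simpa [nsmul_eq_mul] using h
      · intro x hx
        obtain ⟨p, hp, rfl⟩ := Multiset.mem_map.mp hx
        have h1 := inv_le_half (hS p hp)
        linarith
    have hc4 : S.card ≤ 4 := by
      by_contra hc
      push_neg at hc
      have : (5 : ℚ) ≤ S.card := by exact_mod_cast hc
      linarith
    have hcases : S.card = 0 ∨ S.card = 1 ∨ S.card = 2 ∨ S.card = 3 ∨ S.card = 4 := by omega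
    rcases hcases with h0 | h1 | h2 | h3 | h4
    · rw [Multiset.card_eq_zero] at h0; subst h0; simp at hsum'
    · obtain ⟨a, rfl⟩ := Multiset.card_eq_one.mp h1
      have ha := inv_cast_pos (hS a (by simp))
      simp at hsum'
      linarith
    · obtain ⟨a, b, rfl⟩ := Multiset.card_eq_two.mp h2
      have ha := inv_cast_pos (hS a (by simp))
      have hb := inv_cast_pos (hS b (by simp))
      simp [Multiset.insert_eq_cons] at hsum'
      linarith
    · obtain ⟨a, b, c, rfl⟩ := Multiset.card_eq_three.mp h3
      have ha := hS a (by simp)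
      have hb := hS b (by simp)
      have hc := hS c (by simp)
      simp [Multiset.insert_eq_cons] at hsum'
      have heq : (a : ℚ)⁻¹ + (b : ℚ)⁻¹ + (c : ℚ)⁻¹ = 1 := by linarith
      have ha6 := le_six a b c ha hb hc heq
      have hb6 := le_six b a c hb ha hc (by linarith)
      have hc6 := le_six c a b hc ha hb (by linarith)
      interval_cases a <;> interval_cases b <;> interval_cases c <;>
        first
          | decide
          | norm_num at heq
    · have hpos : 0 < S.card := by omega
      obtain ⟨a, ha⟩ := Multiset.card_pos_iff_exists_mem.mp hpos
      obtain ⟨T, rfl⟩ : ∃ T, S = a ::ₘ T := ⟨S.erase a, (Multiset.cons_erase ha).symm⟩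
      have hT3 : T.card = 3 := by simp at h4; omega
      obtain ⟨b, c, d, rfl⟩ := Multiset.card_eq_three.mp hT3
      have ha2 := hS a (by simp)
      have hb2 := hS b (by simp)
      have hc2 := hS c (by simp)
      have hd2 := hS d (by simp)
      simp [Multiset.insert_eq_cons] at hsum'
      have hha := inv_le_half ha2
      have hhb := inv_le_half hb2
      have hhc := inv_le_half hc2
      have hhd := inv_le_half hd2
      have ea : a = 2 := eq_two_of_half_le ha2 (by linarith)
      have eb : b = 2 := eq_two_of_half_le hb2 (by linarith)
      have ec : c = 2 := eq_two_of_half_le hc2 (by linarith)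
      have ed : d = 2 := eq_two_of_half_le hd2 (by linarith)
      subst ea; subst eb; subst ec; subst ed
      right; right; right; rfl
  · rintro (rfl | rfl | rfl | rfl) <;> simp [Multiset.insert_eq_cons] <;> norm_num
end

section
/- For an integer n ≥ 1 let v_n := 1 + X + ⋯ + X^{n−1} ∈ ℤ[X]. If S and T are finite multisets of integers, each ≥ 2, such that ∏_{p ∈ S} v_p = ∏_{q ∈ T} v_q in ℤ[X], then S = T. (Hence the weight sequence of a weighted projective curve can be recovered from its Coxeter polynomial (X−1)²·∏ᵢ v_{pᵢ}.) -/
lemma coxeter_aux (v : ℕ → Polynomial ℤ)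
    (hv : ∀ n, v n = ∑ i ∈ Finset.range n, Polynomial.X ^ i)
    (S T : Multiset ℕ) (hS1 : ∀ q ∈ S, 1 ≤ q)
    (h : (S.map v).prod = (T.map v).prod)
    (p : ℕ) (hpT : p ∈ T) (hp2 : 2 ≤ p) (hmax : ∀ q ∈ S, q ≤ p) : p ∈ S := by
  set ζ : ℂ := Complex.exp (2 * Real.pi * Complex.I / p) with hζdef
  have hp0 : p ≠ 0 := by omega
  have hζ : IsPrimitiveRoot ζ p := Complex.isPrimitiveRoot_exp p hp0
  have heval : ∀ n, (Polynomial.aeval ζ) (v n) = ∑ i ∈ Finset.range n, ζ ^ i := by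
    intro n; rw [hv]; simp
  have hvp0 : (Polynomial.aeval ζ) (v p) = 0 := by
    rw [heval]; exact hζ.geom_sum_eq_zero (by omega)
  have hTz : (Polynomial.aeval ζ) ((T.map v).prod) = 0 := by
    rw [map_multiset_prod]
    apply Multiset.prod_eq_zero
    rw [Multiset.map_map]
    exact Multiset.mem_map.2 ⟨p, hpT, hvp0⟩
  have hSz : (Polynomial.aeval ζ) ((S.map v).prod) = 0 := by rw [h]; exact hTz
  rw [map_multiset_prod, Multiset.map_map] at hSz
  rw [Multiset.prod_eq_zero_iff] at hSz
  obtain ⟨q, hqS, hq0⟩ := Multiset.mem_map.1 hSz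
  simp only [Function.comp_apply] at hq0
  rw [heval] at hq0
  have hζq : ζ ^ q = 1 := by
    have := geom_sum_mul ζ q
    rw [hq0, zero_mul] at this
    linear_combination -this
  have hdvd : p ∣ q := hζ.dvd_of_pow_eq_one q hζq
  have : p ≤ q := Nat.le_of_dvd (hS1 q hqS) hdvd
  have : q = p := le_antisymm (hmax q hqS) this
  rwa [← this]

/-- Let `v_n = 1 + X + ⋯ + X^{n-1} ∈ ℤ[X]`. If `S` and `T` are finite multisets of
integers each `≥ 2` with `∏_{p ∈ S} v_p = ∏_{q ∈ T} v_q` in `ℤ[X]`, then `S = T`.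
Hence the weight sequence of a weighted projective curve can be recovered from its
Coxeter polynomial `(X-1)² ∏ᵢ v_{pᵢ}`. -/
theorem weights_determined_by_coxeter_polynomial
    (v : ℕ → Polynomial ℤ)
    (hv : ∀ n, v n = ∑ i ∈ Finset.range n, Polynomial.X ^ i)
    (S T : Multiset ℕ) (hS : ∀ p ∈ S, 2 ≤ p) (hT : ∀ q ∈ T, 2 ≤ q)
    (h : (S.map v).prod = (T.map v).prod) :
    S = T := by
  have main : ∀ n (S T : Multiset ℕ), Multiset.card S + Multiset.card T ≤ n →
      (∀ p ∈ S, 2 ≤ p) → (∀ q ∈ T, 2 ≤ q) →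
      (S.map v).prod = (T.map v).prod → S = T := by
    intro n
    induction n with
    | zero =>
      intro S T hc _ _ _
      have hS0 : S = 0 := by rw [← Multiset.card_eq_zero]; omega
      have hT0 : T = 0 := by rw [← Multiset.card_eq_zero]; omega
      rw [hS0, hT0]
    | succ n ih =>
      intro S T hc hS hT h
      by_cases hST : S + T = 0
      · have h0 := congrArg Multiset.card hST
        rw [Multiset.card_add, Multiset.card_zero] at h0
        have hS0 : S = 0 := by rw [← Multiset.card_eq_zero]; omega
        have hT0 : T = 0 := by rw [← Multiset.card_eq_zero]; omega
        rw [hS0, hT0]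
      · have hne : (S + T).toFinset.Nonempty := by
          rwa [Multiset.toFinset_nonempty]
        set p := (S + T).toFinset.max' hne with hpdef
        have hpmem : p ∈ S + T := Multiset.mem_toFinset.1 ((S + T).toFinset.max'_mem hne)
        have hp2 : 2 ≤ p := by
          rcases Multiset.mem_add.1 hpmem with h' | h'
          · exact hS p h'
          · exact hT p h'
        have hmaxall : ∀ q ∈ S + T, q ≤ p := fun q hq =>
          Finset.le_max' _ q (Multiset.mem_toFinset.2 hq)
        have hpS : p ∈ S ∧ p ∈ T := by
          rcases Multiset.mem_add.1 hpmem with h' | h'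
          · refine ⟨h', ?_⟩
            exact coxeter_aux v hv T S (fun q hq => by have := hT q hq; omega) h.symm p h'
              hp2 (fun q hq => hmaxall q (Multiset.mem_add.2 (Or.inr hq)))
          · refine ⟨?_, h'⟩
            exact coxeter_aux v hv S T (fun q hq => by have := hS q hq; omega) h p h'
              hp2 (fun q hq => hmaxall q (Multiset.mem_add.2 (Or.inl hq)))
        obtain ⟨hpS, hpT⟩ := hpS
        have hvp : v p ≠ 0 := by
          intro hz
          have h1 : Polynomial.eval 1 (v p) = (p : ℤ) := by rw [hv]; simp
          rw [hz] at h1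
          simp at h1
          omega
        have hprod : v p * ((S.erase p).map v).prod = v p * ((T.erase p).map v).prod := by
          rw [Multiset.prod_map_erase (f := v) hpS, Multiset.prod_map_erase (f := v) hpT, h]
        have h' := mul_left_cancel₀ hvp hprod
        have hcS : 0 < Multiset.card S := Multiset.card_pos.2 (fun h0 => by simp [h0] at hpS)
        have hcT : 0 < Multiset.card T := Multiset.card_pos.2 (fun h0 => by simp [h0] at hpT)
        have hcard : Multiset.card (S.erase p) + Multiset.card (T.erase p) ≤ n := by
          rw [Multiset.card_erase_of_mem hpS, Multiset.card_erase_of_mem hpT,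
            Nat.pred_eq_sub_one, Nat.pred_eq_sub_one]
          omega
        have hrec := ih (S.erase p) (T.erase p) hcard
          (fun q hq => hS q (Multiset.mem_of_mem_erase hq))
          (fun q hq => hT q (Multiset.mem_of_mem_erase hq)) h'
        calc S = p ::ₘ S.erase p := (Multiset.cons_erase hpS).symm
        _ = p ::ₘ T.erase p := by rw [hrec]
        _ = T := Multiset.cons_erase hpT
  exact main (Multiset.card S + Multiset.card T) S T le_rfl hS hT h
end
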